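/- Let p be an odd prime, b* = Λ(σ)⊗F_p[τ] with Bockstein β and power operations P^i acting as a module over the mod-p Steenrod algebra A*. For a representation sphere S^W with W^G ≠ W, let b*S^W ⊂ b*S^{W^G} ≅ Σ^{d} b* (d = dim_R W^G) be the free b*-submodule generated by τ^k·θ, with k = k(W) = (dim_R W - dim_R W^G)/2 > 0 and θ the b*-generator of Σ^d b*. Then every degree-preserving map of graded b*-modules from b*S^W to any shift Σ^t b* that commutes with β and with all P^i is zero unless t = d, and for t = d the space of such maps is one-dimensional, spanned by the inclusion followed by the identification. -/

import Mathlib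

/-!
A homogeneous element of `b*` is a scalar multiple of `σ τ^l` or of `τ^l`. On `σ τ^l` the
Bockstein is injective, so `β y = 0` forces `y = 0` in odd degrees. In even degrees, `y = c τ^l`
must satisfy `P^i y = C(k,i) τ^{i(p-1)} y`, i.e. `c C(l,i) = c C(k,i)`; for `l ≠ k` the index
`i = max k l` makes exactly one of the two binomial coefficients vanish, so `c = 0`. Hence only
`l = k`, i.e. `t = d`, survives, and there every multiple of `τ^k` is compatible.
-/

noncomputable section

abbrev Bpoly (p : ℕ) := MvPolynomial (Fin 2) (ZMod p)
abbrev Brel (p : ℕ) : Ideal (Bpoly p) := Ideal.span {(MvPolynomial.X 0 : Bpoly p) ^ 2}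
/-- `B p` models `b* = Λ(σ) ⊗ F_p[τ]`. -/
abbrev B (p : ℕ) := Bpoly p ⧸ Brel p

/-- σ (degree 1) -/
def sg (p : ℕ) : B p := Ideal.Quotient.mk _ (MvPolynomial.X 0)
/-- τ (degree 2) -/
def tg (p : ℕ) : B p := Ideal.Quotient.mk _ (MvPolynomial.X 1)

/-- degree-`n` component of `b*` -/
def comp (p n : ℕ) : Submodule (ZMod p) (B p) :=
  Submodule.span (ZMod p) {x | ∃ a b : ℕ, a ≤ 1 ∧ a + 2 * b = n ∧ x = sg p ^ a * tg p ^ b}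

/-- components indexed by integers (zero in negative degrees) -/
def compZ (p : ℕ) (i : ℤ) : Submodule (ZMod p) (B p) :=
  if i < 0 then ⊥ else comp p i.toNat

lemma Nat.cast_choose_max_ne {R : Type*} [Semiring R] [Nontrivial R] {k l : ℕ} (h : l ≠ k) :
    (l.choose (max k l) : R) ≠ k.choose (max k l) := by
  rcases h.lt_or_gt with hlt | hgt
  · rw [max_eq_left hlt.le, Nat.choose_eq_zero_of_lt hlt, Nat.choose_self]
    simp
  · rw [max_eq_right hgt.le, Nat.choose_self, Nat.choose_eq_zero_of_lt hgt]
    simp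

section

variable {p : ℕ} [Fact p.Prime]

lemma tg_pow_ne_zero (m : ℕ) : tg p ^ m ≠ 0 := by
  let ev : Bpoly p →+* ZMod p := MvPolynomial.eval ![0, 1]
  have hrel : ∀ a ∈ Brel p, ev a = 0 := by
    intro a ha
    obtain ⟨q, rfl⟩ := Ideal.mem_span_singleton'.mp ha
    simp [ev]
  intro h
  simpa [tg, ev] using congrArg (Ideal.Quotient.lift (Brel p) ev hrel) h

lemma comp_eq_span_singleton (n : ℕ) :
    comp p n = Submodule.span (ZMod p) {sg p ^ (n % 2) * tg p ^ (n / 2)} := by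
  rw [comp]
  congr 1
  ext x
  constructor
  · rintro ⟨a, b, ha, hab, rfl⟩
    obtain rfl : a = n % 2 := by omega
    obtain rfl : b = n / 2 := by omega
    rfl
  · rintro rfl
    exact ⟨n % 2, n / 2, by omega, by omega, rfl⟩

lemma mem_comp_two_mul_iff {l : ℕ} {y : B p} :
    y ∈ comp p (2 * l) ↔ ∃ c : ZMod p, y = c • tg p ^ l := by
  rw [comp_eq_span_singleton, Submodule.mem_span_singleton]
  simp [eq_comm]

lemma mem_comp_two_mul_add_one_iff {l : ℕ} {y : B p} :
    y ∈ comp p (2 * l + 1) ↔ ∃ c : ZMod p, y = c • (sg p * tg p ^ l) := by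
  rw [comp_eq_span_singleton, Submodule.mem_span_singleton]
  have h2 : (2 * l + 1) / 2 = l := by omega
  simp [h2, eq_comm]

lemma eq_zero_of_mem_comp_two_mul_add_one_of_bockstein_eq_zero (β : B p →ₗ[ZMod p] B p)
    (hβστ : ∀ l : ℕ, β (sg p * tg p ^ l) = tg p ^ (l + 1)) {l : ℕ} {y : B p}
    (hy : y ∈ comp p (2 * l + 1)) (hβ : β y = 0) : y = 0 := by
  obtain ⟨c, rfl⟩ := mem_comp_two_mul_add_one_iff.mp hy
  rw [map_smul, hβστ, smul_eq_zero] at hβ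
  simp [hβ.resolve_right (tg_pow_ne_zero _)]

lemma eq_zero_of_mem_comp_two_mul_of_powerOp_eq (Pi : ℕ → B p →ₗ[ZMod p] B p)
    (hPiτ : ∀ (i l : ℕ),
      Pi i (tg p ^ l) = (Nat.choose l i : ZMod p) • tg p ^ (l + i * (p - 1)))
    {k l : ℕ} (hlk : l ≠ k) {y : B p} (hy : y ∈ comp p (2 * l))
    (hP : ∀ i : ℕ, Pi i y = (Nat.choose k i : ZMod p) • (tg p ^ (i * (p - 1)) * y)) :
    y = 0 := by
  obtain ⟨c, rfl⟩ := mem_comp_two_mul_iff.mp hy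
  set M := max k l
  have hcoef : c * (l.choose M : ZMod p) = (k.choose M : ZMod p) * c := by
    have h := hP M
    rw [map_smul, hPiτ, smul_smul, mul_smul_comm, ← pow_add, add_comm (M * (p - 1)),
      smul_smul] at h
    exact smul_left_injective (ZMod p) (tg_pow_ne_zero _) h
  have hc : c * ((l.choose M : ZMod p) - k.choose M) = 0 := by
    rw [mul_sub, hcoef, mul_comm, sub_self]
  rcases mul_eq_zero.mp hc with hc | hc
  · simp [hc]
  · exact absurd (sub_eq_zero.mp hc) (Nat.cast_choose_max_ne hlk)

end

/-- `b*S^W` is the free `b*`-module on a generator `θ(W)` of degree `d + 2k`, included in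
`Σ^d b*` via `θ(W) ↦ τ^k`. A degree-preserving `b*`-linear map `b*S^W → Σ^t b*` is determined by
the image `y` of `θ(W)`, homogeneous of degree `d + 2k - t`; compatibility with `β` and all `P^i`
says `β(y) = 0` and `P^i(y) = C(k,i)·τ^{i(p-1)}·y`. -/
theorem stmt11_general (p : ℕ) [Fact p.Prime]
    (β : B p →ₗ[ZMod p] B p)
    (hβτ : ∀ l : ℕ, β (tg p ^ l) = 0)
    (hβστ : ∀ l : ℕ, β (sg p * tg p ^ l) = tg p ^ (l + 1))
    (Pi : ℕ → B p →ₗ[ZMod p] B p)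
    (hPiτ : ∀ (i l : ℕ), Pi i (tg p ^ l) = (Nat.choose l i : ZMod p) • tg p ^ (l + i * (p - 1)))
    (d k : ℕ) (t : ℤ) :
    (∀ y : B p, y ∈ compZ p ((d : ℤ) + 2 * k - t) → β y = 0 →
      (∀ i : ℕ, Pi i y = (Nat.choose k i : ZMod p) • (tg p ^ (i * (p - 1)) * y)) →
      t ≠ (d : ℤ) → y = 0) ∧
    (∀ y : B p,
      (y ∈ comp p (2 * k) ∧ β y = 0 ∧
        (∀ i : ℕ, Pi i y = (Nat.choose k i : ZMod p) • (tg p ^ (i * (p - 1)) * y))) ↔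
      ∃ c : ZMod p, y = c • tg p ^ k) := by
  refine ⟨fun y hy hβ hP ht => ?_, fun y => ⟨fun h => mem_comp_two_mul_iff.mp h.1, ?_⟩⟩
  · rw [compZ] at hy
    split_ifs at hy with hneg
    · exact (Submodule.mem_bot _).mp hy
    obtain ⟨l, hl | hl⟩ := Nat.even_or_odd' (d + 2 * k - t).toNat <;> rw [hl] at hy
    · exact eq_zero_of_mem_comp_two_mul_of_powerOp_eq Pi hPiτ (by omega) hy hP
    · exact eq_zero_of_mem_comp_two_mul_add_one_of_bockstein_eq_zero β hβστ hy hβ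
  · rintro ⟨c, rfl⟩
    refine ⟨mem_comp_two_mul_iff.mpr ⟨c, rfl⟩, by rw [map_smul, hβτ, smul_zero], fun i => ?_⟩
    rw [map_smul, hPiτ, mul_smul_comm, ← pow_add, smul_smul, smul_smul, mul_comm, add_comm]

/-- `b*S^W` is the free `b*`-module on a generator `θ(W)` of degree
`d + 2k` (`d = dim W^G`, `k = k(W) > 0`), included in `Σ^d b*` via `θ(W) ↦ τ^k`.
A degree-preserving `b*`-linear map `b*S^W → Σ^t b*` is determined by the image `y` of
`θ(W)`, homogeneous of degree `d + 2k - t`; compatibility with `β` and all `P^i` says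
`β(y) = 0` and `P^i(y) = C(k,i)·τ^{i(p-1)}·y` (mirroring the `A*`-action on `τ^k·θ`).
Any such map is zero unless `t = d`, and for `t = d` the space of such maps is
one-dimensional, spanned by `y = τ^k`. -/
theorem stmt11 (p : ℕ) [Fact p.Prime] (hodd : Odd p)
    (β : B p →ₗ[ZMod p] B p)
    (hβτ : ∀ l : ℕ, β (tg p ^ l) = 0)
    (hβστ : ∀ l : ℕ, β (sg p * tg p ^ l) = tg p ^ (l + 1))
    (Pi : ℕ → B p →ₗ[ZMod p] B p)
    (hPiτ : ∀ (i l : ℕ), Pi i (tg p ^ l) = (Nat.choose l i : ZMod p) • tg p ^ (l + i * (p - 1)))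
    (hPiστ : ∀ (i l : ℕ),
      Pi i (sg p * tg p ^ l) = (Nat.choose l i : ZMod p) • (sg p * tg p ^ (l + i * (p - 1))))
    (d k : ℕ) (hk : 0 < k) (t : ℤ) :
    (∀ y : B p, y ∈ compZ p ((d : ℤ) + 2 * k - t) → β y = 0 →
      (∀ i : ℕ, Pi i y = (Nat.choose k i : ZMod p) • (tg p ^ (i * (p - 1)) * y)) →
      t ≠ (d : ℤ) → y = 0) ∧
    (∀ y : B p,
      (y ∈ comp p (2 * k) ∧ β y = 0 ∧
        (∀ i : ℕ, Pi i y = (Nat.choose k i : ZMod p) • (tg p ^ (i * (p - 1)) * y))) ↔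
      ∃ c : ZMod p, y = c • tg p ^ k) :=
  stmt11_general p β hβτ hβστ Pi hPiτ d k t
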